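/- arXiv:2112.05281 — 5 statements merged into one kernel-verified Lean document; each statement's English description precedes it below -/
import Mathlib

section
/- For all integers k ≥ 1, n ≥ 1 and m ≥ 0, if k does not divide n then C_k(n,m) = n·C_k(n-1,m). -/
/-!
Let `a_P(n)` (`permProb k P n`) be the probability that a random permutation of `n` letters
has a number of `k`-cycles satisfying `P`. Splitting off the cycle through a fixed letter, of
length `r`, leaves a permutation of the other `n - r` letters; the `(r - 1)!` cycles on a given
`r`-set and the `choose (n - 1) (r - 1)` such sets give
`n a_P(n) = ∑_{i < n} a_P(i) + a_{P(· + 1)}(n - k) - a_P(n - k)` (last two terms only if `k ≤ n`).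
Subtracting this identity at `n - 1` shows that `n (a_P(n) - a_P(n - 1))` is a difference of the
correction terms at `n - k` and `n - k - 1`, which vanishes by strong induction when `k ∤ n`,
because then `k ∤ n - k` as well. Since `P` is shifted in the recursion, the induction runs over
all predicates `P` at once.
-/

/-- `C k n m` is the number of permutations of `n` letters whose cycle
decomposition contains exactly `m` cycles of length `k`. -/
noncomputable def C (k n m : ℕ) : ℕ :=
  Nat.card {π : Equiv.Perm (Fin n) // π.cycleType.count k = m}

open Equiv Finset
open scoped Nat

namespace Equiv.Perm

section SubtypeCongr

variable {α : Type*} {p : α → Prop} [DecidablePred p]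
  (σ : Perm {x // p x}) (τ : Perm {x // ¬p x})

theorem subtypeCongr_eq_ofSubtype_mul : σ.subtypeCongr τ = ofSubtype σ * ofSubtype τ := by
  ext x
  rw [Perm.mul_apply]
  by_cases hx : p x
  · rw [subtypeCongr.left_apply _ _ hx, ofSubtype_apply_of_not_mem τ (not_not.2 hx),
      ofSubtype_apply_of_mem σ hx]
  · rw [subtypeCongr.right_apply _ _ hx, ofSubtype_apply_of_mem τ hx,
      ofSubtype_apply_of_not_mem σ (τ _).2]

theorem cycleType_subtypeCongr [Fintype α] [DecidableEq α] [Fintype {x // p x}]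
    [Fintype {x // ¬p x}] : (σ.subtypeCongr τ).cycleType = σ.cycleType + τ.cycleType := by
  have hd : Disjoint (ofSubtype σ) (ofSubtype τ) := fun x => by
    by_cases hx : p x
    · exact Or.inr (ofSubtype_apply_of_not_mem τ (not_not.2 hx))
    · exact Or.inl (ofSubtype_apply_of_not_mem σ hx)
  rw [subtypeCongr_eq_ofSubtype_mul, hd.cycleType_mul, cycleType_ofSubtype, cycleType_ofSubtype]

theorem sameCycle_subtypeCongr_iff (x : {x // p x}) (y : α) :
    (σ.subtypeCongr τ).SameCycle x y ↔ ∃ hy : p y, σ.SameCycle x ⟨y, hy⟩ := by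
  have hpow (i : ℤ) : ((σ.subtypeCongr τ) ^ i) x = ((σ ^ i) x : α) := by
    change (subtypeCongrHom p (σ, τ) ^ i) x = _
    rw [← map_zpow, Prod.pow_def]
    exact subtypeCongr.left_apply_subtype _ _ _
  simp only [SameCycle, hpow, Subtype.ext_iff]
  exact ⟨fun ⟨i, hi⟩ => ⟨hi ▸ ((σ ^ i) x).2, i, hi⟩, fun ⟨_, i, hi⟩ => ⟨i, hi⟩⟩

theorem subtypeCongr_subtypePerm (π : Perm α) (h : ∀ x, p (π x) ↔ p x)
    (h' : ∀ x, ¬p (π x) ↔ ¬p x) : (π.subtypePerm h).subtypeCongr (π.subtypePerm h') = π := by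
  ext x
  by_cases hx : p x
  · rw [subtypeCongr.left_apply _ _ hx, subtypePerm_apply]
  · rw [subtypeCongr.right_apply _ _ hx, subtypePerm_apply]

end SubtypeCongr

section SameCycleAll

variable {β : Type*} [Fintype β] [DecidableEq β]

theorem cycleType_eq_singleton_card_iff (hβ : 2 ≤ Fintype.card β) (σ : Perm β) :
    σ.cycleType = {Fintype.card β} ↔ ∀ x y, σ.SameCycle x y := by
  constructor
  · intro h x y
    have hcyc : σ.IsCycle := card_cycleType_eq_one.1 (by simp [h])
    have hsupp : σ.support = univ :=
      eq_univ_of_card _ (by rw [← sum_cycleType, h, Multiset.sum_singleton])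
    exact hcyc.sameCycle (mem_support.1 (hsupp ▸ mem_univ x))
      (mem_support.1 (hsupp ▸ mem_univ y))
  · intro h
    have hmoved (x : β) : σ x ≠ x := by
      intro hx
      obtain ⟨y, hy⟩ := Fintype.exists_ne_of_one_lt_card hβ x
      exact hy ((h x y).eq_of_left hx).symm
    obtain ⟨x⟩ : Nonempty β := Fintype.card_pos_iff.1 (by omega)
    have hcyc : σ.IsCycle := ⟨x, hmoved x, fun y _ => h x y⟩
    rw [hcyc.cycleType, eq_univ_of_forall fun x => mem_support.2 (hmoved x), card_univ]

theorem card_filter_sameCycle_all :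
    #{σ : Perm β | ∀ x y, σ.SameCycle x y} = (Fintype.card β - 1)! := by
  rcases le_or_gt (Fintype.card β) 1 with hβ | hβ
  · have : Subsingleton β := Fintype.card_le_one_iff_subsingleton.1 hβ
    rw [filter_true_of_mem fun σ _ x y => Subsingleton.elim x y ▸ SameCycle.refl σ x, card_univ,
      Fintype.card_perm]
    interval_cases Fintype.card β <;> rfl
  · simp_rw [← cycleType_eq_singleton_card_iff hβ]
    rw [card_of_cycleType_singleton hβ le_rfl, Nat.choose_self, mul_one]

theorem count_cycleType_of_sameCycle_all {k : ℕ} (hk : 2 ≤ k) {σ : Perm β}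
    (hσ : ∀ x y, σ.SameCycle x y) :
    σ.cycleType.count k = if Fintype.card β = k then 1 else 0 := by
  rcases le_or_gt (Fintype.card β) 1 with hβ | hβ
  · have : Subsingleton β := Fintype.card_le_one_iff_subsingleton.1 hβ
    rw [Subsingleton.elim σ 1, cycleType_one, Multiset.count_zero, if_neg (by omega)]
  · rw [(cycleType_eq_singleton_card_iff hβ σ).2 hσ, Multiset.count_singleton]
    simp only [eq_comm]

end SameCycleAll

section Orbit

variable {α : Type*} [Fintype α] [DecidableEq α]

def orbitFinset (π : Perm α) (a : α) : Finset α := {x | π.SameCycle a x}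

theorem mem_orbitFinset {π : Perm α} {a x : α} : x ∈ π.orbitFinset a ↔ π.SameCycle a x := by
  simp [orbitFinset]

theorem orbitFinset_subtypeCongr_eq_iff {s : Finset α} {a : α} (ha : a ∈ s)
    (σ : Perm {x // x ∈ s}) (τ : Perm {x // x ∉ s}) :
    (σ.subtypeCongr τ).orbitFinset a = s ↔ ∀ x y, σ.SameCycle x y := by
  have hsc := sameCycle_subtypeCongr_iff σ τ ⟨a, ha⟩
  simp only [Finset.ext_iff, mem_orbitFinset]
  constructor
  · intro h x y
    obtain ⟨_, hx⟩ := (hsc x).1 ((h x).2 x.2)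
    obtain ⟨_, hy⟩ := (hsc y).1 ((h y).2 y.2)
    exact hx.symm.trans hy
  · intro h x
    rw [hsc x]
    exact ⟨fun ⟨hx, _⟩ => hx, fun hx => ⟨hx, h _ _⟩⟩

end Orbit

theorem cycleType_permCongr {β γ : Type*} [Fintype β] [DecidableEq β] [Fintype γ]
    [DecidableEq γ] (e : β ≃ γ) (π : Perm β) : (e.permCongr π).cycleType = π.cycleType := by
  have h : e.permCongr π =
      π.extendDomain (e.trans (subtypeUnivEquiv fun _ => trivial).symm) := by
    ext x
    rw [extendDomain_apply_subtype _ _ trivial]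
    rfl
  rw [h, cycleType_extendDomain]

end Equiv.Perm

open Equiv.Perm

noncomputable def permCount (k : ℕ) (P : ℕ → Prop) (β : Type*) [Fintype β] [DecidableEq β] : ℕ :=
  Nat.card {π : Perm β // P (π.cycleType.count k)}

theorem permCount_congr {k : ℕ} {P : ℕ → Prop} {β γ : Type*} [Fintype β] [DecidableEq β]
    [Fintype γ] [DecidableEq γ] (e : β ≃ γ) : permCount k P β = permCount k P γ :=
  Nat.card_congr <| e.permCongr.subtypeEquiv fun π => by rw [cycleType_permCongr]

section Decomposition

variable {α : Type*} [Fintype α] [DecidableEq α] {k : ℕ}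

theorem card_perm_orbitFinset_eq (hk : 2 ≤ k) (P : ℕ → Prop) {a : α} {s : Finset α} (ha : a ∈ s) :
    Nat.card {π : Perm α // π.orbitFinset a = s ∧ P (π.cycleType.count k)} =
      (#s - 1)! * permCount k (fun c => P (c + if #s = k then 1 else 0)) {x // x ∉ s} := by
  let f : {σ : Perm {x // x ∈ s} // ∀ x y, σ.SameCycle x y} ×
      {τ : Perm {x // x ∉ s} // P (τ.cycleType.count k + if #s = k then 1 else 0)} →
      {π : Perm α // π.orbitFinset a = s ∧ P (π.cycleType.count k)} := fun στ =>
    ⟨στ.1.1.subtypeCongr στ.2.1, (orbitFinset_subtypeCongr_eq_iff ha _ _).2 στ.1.2, by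
      rw [cycleType_subtypeCongr, Multiset.count_add, add_comm,
        count_cycleType_of_sameCycle_all hk στ.1.2, Fintype.card_coe]
      exact στ.2.2⟩
  have hf : Function.Bijective f := by
    refine ⟨fun x y hxy => ?_, fun ⟨π, horb, hP⟩ => ?_⟩
    · have h := subtypeCongrHom_injective (fun x => x ∈ s) (a₁ := (x.1.1, x.2.1))
        (a₂ := (y.1.1, y.2.1)) (congrArg Subtype.val hxy)
      simp only [Prod.mk.injEq] at h
      exact Prod.ext (Subtype.ext h.1) (Subtype.ext h.2)
    · have hs (x : α) : π x ∈ s ↔ x ∈ s := by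
        rw [← horb, mem_orbitFinset, mem_orbitFinset, sameCycle_apply_right]
      set σ := π.subtypePerm hs
      set τ := π.subtypePerm (p := fun x => x ∉ s) fun x => not_congr (hs x)
      have hπ : σ.subtypeCongr τ = π := subtypeCongr_subtypePerm _ _ _
      have hσ : ∀ x y, σ.SameCycle x y :=
        (orbitFinset_subtypeCongr_eq_iff ha σ τ).1 (hπ ▸ horb)
      have hτ := hP
      rw [← hπ, cycleType_subtypeCongr, Multiset.count_add, add_comm,
        count_cycleType_of_sameCycle_all hk hσ, Fintype.card_coe] at hτ
      exact ⟨(⟨σ, hσ⟩, ⟨τ, hτ⟩), Subtype.ext hπ⟩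
  rw [← Nat.card_eq_of_bijective f hf, Nat.card_prod, Nat.card_eq_fintype_card,
    Fintype.card_subtype, card_filter_sameCycle_all, Fintype.card_coe]
  rfl

theorem permCount_eq_sum_filter_mem (hk : 2 ≤ k) (P : ℕ → Prop) (a : α) :
    permCount k P α = ∑ s ∈ univ.filter (a ∈ ·), (#s - 1)! *
      permCount k (fun c => P (c + if #s = k then 1 else 0)) (Fin (Fintype.card α - #s)) := by
  classical
  rw [permCount, Nat.card_eq_fintype_card, Fintype.card_subtype,
    card_eq_sum_card_fiberwise (f := fun π => π.orbitFinset a) (t := univ.filter (a ∈ ·))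
      fun π _ => by simp [mem_orbitFinset, SameCycle.refl]]
  refine sum_congr rfl fun s hs => ?_
  have hcard : Fintype.card {x // x ∉ s} = Fintype.card α - #s := by
    rw [Fintype.card_subtype_compl, Fintype.card_coe]
  rw [← permCount_congr (Fintype.equivFinOfCardEq hcard),
    ← card_perm_orbitFinset_eq hk P (mem_filter.1 hs).2, Nat.card_eq_fintype_card,
    Fintype.card_subtype, filter_filter]
  simp only [and_comm]

theorem sum_filter_mem_eq_sum_range {M : Type*} [AddCommMonoid M] (a : α) (g : ℕ → M) :
    ∑ s ∈ univ.filter (a ∈ ·), g #s =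
      ∑ i ∈ range (Fintype.card α), (Fintype.card α - 1).choose i • g (i + 1) := by
  have hcard : #(univ.erase a) = Fintype.card α - 1 := by
    rw [card_erase_of_mem (mem_univ a), card_univ]
  have hpos : 0 < Fintype.card α := Fintype.card_pos_iff.2 ⟨a⟩
  rw [show Fintype.card α = #(univ.erase a) + 1 by omega, Nat.add_sub_cancel,
    ← sum_powerset_apply_card (fun i => g (i + 1))]
  refine sum_nbij' (fun s => s.erase a) (insert a) ?_ ?_ ?_ ?_ ?_
  · intro s _
    simp [erase_subset_erase]
  · intro t ht
    simp
  · intro s hs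
    exact insert_erase (mem_filter.1 hs).2
  · intro t ht
    exact erase_insert fun h => by simpa using mem_powerset.1 ht h
  · intro s hs
    have ha := (mem_filter.1 hs).2
    rw [card_erase_of_mem ha, Nat.sub_add_cancel (card_pos.2 ⟨a, ha⟩)]

end Decomposition

noncomputable def permProb (k : ℕ) (P : ℕ → Prop) (n : ℕ) : ℚ :=
  permCount k P (Fin n) / n !

section Recurrence

variable {k : ℕ}

theorem succ_mul_permProb_succ (hk : 2 ≤ k) (P : ℕ → Prop) (n : ℕ) :
    (n + 1) * permProb k P (n + 1) =
      ∑ i ∈ range (n + 1), permProb k (fun c => P (c + if n + 1 - i = k then 1 else 0)) i := by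
  have h := permCount_eq_sum_filter_mem hk P (0 : Fin (n + 1))
  rw [Fintype.card_fin, sum_filter_mem_eq_sum_range (0 : Fin (n + 1)) fun r => (r - 1)! *
    permCount k (fun c => P (c + if r = k then 1 else 0)) (Fin (n + 1 - r))] at h
  simp only [Fintype.card_fin, Nat.add_sub_cancel, smul_eq_mul] at h
  rw [← sum_range_reflect, permProb, h, Nat.factorial_succ, Nat.cast_mul, Nat.cast_sum,
    sum_div, mul_sum]
  refine sum_congr rfl fun i hi => ?_
  have hin : i ≤ n := Nat.lt_succ_iff.1 (mem_range.1 hi)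
  rw [show n + 1 - (i + 1) = n - i by omega, show n + 1 - 1 - i = n - i by omega,
    show n + 1 - (n - i) = i + 1 by omega, permProb]
  have hfac : (n.choose i * i ! * (n - i)! : ℚ) = n ! := by
    exact_mod_cast Nat.choose_mul_factorial_mul_factorial hin
  have : ((n - i)! : ℚ) ≠ 0 := by positivity
  field_simp
  push_cast
  linear_combination ((n : ℚ) + 1) *
    (permCount k (fun c => P (c + if i + 1 = k then 1 else 0)) (Fin (n - i)) : ℚ) * hfac

theorem mul_permProb (hk : 2 ≤ k) (P : ℕ → Prop) (n : ℕ) :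
    n * permProb k P n = ∑ i ∈ range n, permProb k P i +
      if k ≤ n then permProb k (fun c => P (c + 1)) (n - k) - permProb k P (n - k) else 0 := by
  cases n with
  | zero =>
    simp only [CharP.cast_eq_zero, zero_mul, range_zero, sum_empty, zero_add,
      if_neg (by omega : ¬k ≤ 0)]
  | succ n =>
    have hsplit (i : ℕ) : permProb k (fun c => P (c + if n + 1 - i = k then 1 else 0)) i =
        permProb k P i + if n + 1 - i = k then
          permProb k (fun c => P (c + 1)) i - permProb k P i else 0 := by
      split_ifs <;> simp
    push_cast
    rw [succ_mul_permProb_succ hk, sum_congr rfl fun i _ => hsplit i, sum_add_distrib]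
    congr 1
    split_ifs with hkn
    · rw [sum_eq_single_of_mem (n + 1 - k) (mem_range.2 (by omega))
        fun i _ hi => if_neg (by omega), if_pos (by omega)]
    · exact sum_eq_zero fun i _ => if_neg (by omega)

theorem permProb_succ_eq_of_not_dvd (hk : 2 ≤ k) {n : ℕ} (hn : ¬k ∣ n + 1)
    (P : ℕ → Prop) : permProb k P (n + 1) = permProb k P n := by
  induction n using Nat.strong_induction_on generalizing P with
  | _ n ih =>
  have hE : (if k ≤ n + 1 then
        permProb k (fun c => P (c + 1)) (n + 1 - k) - permProb k P (n + 1 - k) else 0) =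
      if k ≤ n then permProb k (fun c => P (c + 1)) (n - k) - permProb k P (n - k) else 0 := by
    by_cases hkn : k ≤ n
    · have hd : ¬k ∣ n - k + 1 := fun h =>
        hn (by rw [show n + 1 = n - k + 1 + k by omega]; exact Nat.dvd_add_self_right.2 h)
      rw [if_pos (by omega), if_pos hkn, show n + 1 - k = n - k + 1 by omega,
        ih _ (by omega) hd, ih _ (by omega) hd]
    · have : k ≠ n + 1 := fun h => hn (h ▸ dvd_refl k)
      rw [if_neg (by omega), if_neg hkn]
  have h1 := mul_permProb hk P (n + 1)
  have h0 := mul_permProb hk P n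
  rw [sum_range_succ, hE] at h1
  push_cast at h1
  have h : ((n : ℚ) + 1) * (permProb k P (n + 1) - permProb k P n) = 0 := by linarith
  simpa [sub_eq_zero, Nat.cast_add_one_ne_zero] using h

theorem permCount_fin_eq_mul (hk : 2 ≤ k) {n : ℕ} (hn : ¬k ∣ n) (P : ℕ → Prop) :
    permCount k P (Fin n) = n * permCount k P (Fin (n - 1)) := by
  obtain ⟨n, rfl⟩ : ∃ j, n = j + 1 :=
    Nat.exists_eq_add_one.2 (Nat.pos_of_ne_zero fun h => hn (h ▸ dvd_zero k))
  have h := permProb_succ_eq_of_not_dvd hk hn P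
  rw [permProb, permProb, Nat.factorial_succ, Nat.cast_mul, div_eq_div_iff (by positivity)
    (by positivity)] at h
  rw [Nat.add_sub_cancel]
  have hq : (permCount k P (Fin (n + 1)) : ℚ) = (n + 1 : ℕ) * permCount k P (Fin n) :=
    mul_right_cancel₀ (by positivity : (n ! : ℚ) ≠ 0) (by rw [h]; ring)
  exact_mod_cast hq

end Recurrence

theorem stmt1_general (k n m : ℕ) (hk : 1 ≤ k) (hkn : ¬ k ∣ n) :
    C k n m = n * C k (n - 1) m := by
  have hk2 : 2 ≤ k := by
    have : k ≠ 1 := by rintro rfl; exact hkn (one_dvd n)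
    omega
  -- `C k n m` unfolds to `permCount k (· = m) (Fin n)`.
  exact permCount_fin_eq_mul hk2 hkn (· = m)

theorem stmt1 (k n m : ℕ) (hk : 1 ≤ k) (hn : 1 ≤ n) (hkn : ¬ k ∣ n) :
    C k n m = n * C k (n - 1) m :=
  stmt1_general k n m hk hkn
end

section
/- For all integers k > 1, n ≥ 1 and m ≥ 0 with C_k(n,m) > 0, the expected value of π(1) over permutations π ∈ S_n with exactly m k-cycles satisfies E[π(1)] = (n/2)·(1 - C_k(n-1,m)/C_k(n,m)) + 1; equivalently, 2·Σ_{π} π(1) = (n+2)·C_k(n,m) - n·C_k(n-1,m), where the sum is over all permutations π ∈ S_n with exactly m k-cycles. -/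
/-!
Condition on `π 0`. The permutations of `Fin (n + 1)` with `m` cycles of length `k` that fix `0`
are counted by `C k n m`, and conjugating by the transposition `(j j')`, which fixes `0` and
preserves cycle types, shows that the values `j ≠ 0` of `π 0` are all equally frequent. Hence
`C k (n + 1) m = C k n m + n A` and `∑ (π 0 + 1) = C k n m + A ∑_{j=1}^{n} (j + 1)`, and eliminating
the common frequency `A` gives the formula.
-/

open Equiv Equiv.Perm Finset

lemma C_eq_card (k n m : ℕ) : C k n m = #{π : Perm (Fin n) | π.cycleType.count k = m} := by
  rw [C, Nat.card_eq_fintype_card, Fintype.card_subtype]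

section
variable {α : Type*} [Fintype α] [DecidableEq α]

lemma card_filter_apply_eq_of_ne {P : Perm α → Prop} [DecidablePred P]
    (hP : ∀ σ π, P π → P (σ * π * σ⁻¹)) {a j j' : α} (hj : j ≠ a) (hj' : j' ≠ a) :
    #{π | P π ∧ π a = j} = #{π | P π ∧ π a = j'} := by
  have hfix : swap j j' a = a := swap_apply_of_ne_of_ne hj.symm hj'.symm
  have hinv : ∀ π : Perm α, swap j j' * (swap j j' * π * swap j j') * swap j j' = π := by
    intro π
    simp only [mul_assoc, swap_mul_self, mul_one, swap_mul_self_mul]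
  refine card_nbij' (fun π => swap j j' * π * swap j j') (fun π => swap j j' * π * swap j j')
    ?_ ?_ (fun π _ => hinv π) (fun π _ => hinv π)
  all_goals
    intro π hπ
    obtain ⟨hπ, hπa⟩ := (mem_filter_univ π).mp hπ
    rw [mem_coe, mem_filter_univ]
    refine ⟨by simpa only [swap_inv] using hP (swap j j') π hπ, ?_⟩
    simp only [Perm.mul_apply, hfix, hπa, swap_apply_left, swap_apply_right]

lemma card_filter_cycleType_apply_self {β : Type*} [Fintype β] [DecidableEq β]
    (Q : Multiset ℕ → Prop) [DecidablePred Q] {a : α} (f : β ≃ {x // x ≠ a}) :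
    #{π : Perm α | Q π.cycleType ∧ π a = a} = #{σ : Perm β | Q σ.cycleType} := by
  refine (card_bij (fun σ _ => σ.extendDomain f) ?_ ?_ ?_).symm
  · intro σ hσ
    simp only [mem_filter, mem_univ, true_and, cycleType_extendDomain] at hσ ⊢
    exact ⟨hσ, extendDomain_apply_not_subtype _ _ (by simp)⟩
  · intro σ _ τ _ h
    exact extendDomainHom_injective f h
  · intro π hπ
    obtain ⟨hπ, hπa⟩ := (mem_filter.mp hπ).2
    have hne : ∀ x, π x ≠ a ↔ x ≠ a := fun x =>
      not_congr (by conv_lhs => rw [← hπa, π.apply_eq_iff_eq])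
    have hext : (f.symm.permCongr (π.subtypePerm hne)).extendDomain f = π := by
      ext x
      by_cases hx : x = a
      · subst hx; rw [extendDomain_apply_not_subtype _ f (by simp), hπa]
      · rw [extendDomain_apply_subtype _ f hx]
        simp only [permCongr_apply, symm_symm, apply_symm_apply, subtypePerm_apply]
    refine ⟨_, ?_, hext⟩
    rw [mem_filter, ← cycleType_extendDomain f, hext]
    exact ⟨mem_univ _, hπ⟩

end

lemma sum_fin_val_mul_two (n : ℕ) : (∑ i : Fin n, (i : ℚ)) * 2 = n * (n - 1) := by
  induction n with
  | zero => simp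
  | succ n ih =>
    simp only [Fin.sum_univ_castSucc, Fin.val_castSucc, Fin.val_last, add_mul, ih]
    push_cast
    ring

theorem two_mul_sum_filter_apply_zero_add_one {n : ℕ} {P : Perm (Fin (n + 1)) → Prop}
    [DecidablePred P] (hP : ∀ σ π, P π → P (σ * π * σ⁻¹)) :
    2 * ∑ π with P π, ((π 0 : ℚ) + 1)
      = (n + 3) * #{π | P π} - (n + 1) * #{π | P π ∧ π 0 = 0} := by
  set N : Fin (n + 1) → ℕ := fun j => #{π | P π ∧ π 0 = j} with hN
  have hfiber : ∀ j, ({π | P π} : Finset (Perm (Fin (n + 1)))).filter (fun π => π 0 = j)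
      = ({π | P π ∧ π 0 = j} : Finset _) := fun j => filter_filter _ _ _
  have hcard : #{π | P π} = ∑ j, N j := by
    simp only [hN, ← hfiber]
    exact card_eq_sum_card_fiberwise fun π _ => mem_univ (π 0)
  have hsum : ∑ π with P π, ((π 0 : ℚ) + 1) = ∑ j, (N j : ℚ) * ((j : ℚ) + 1) := by
    rw [← sum_fiberwise _ (fun π => π 0)]
    refine sum_congr rfl fun j _ => ?_
    rw [sum_congr rfl fun π hπ => by rw [(mem_filter.mp hπ).2], sum_const, nsmul_eq_mul, hfiber]
  obtain ⟨A, hA⟩ : ∃ A, ∀ i : Fin n, N i.succ = A := by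
    rcases n with _ | n
    · exact ⟨0, fun i => i.elim0⟩
    · exact ⟨N 1, fun i => card_filter_apply_eq_of_ne hP (Fin.succ_ne_zero i) one_ne_zero⟩
  have hgauss := sum_fin_val_mul_two n
  rw [hsum, hcard]
  simp only [Fin.sum_univ_succ, hA, Fin.val_zero, Fin.val_succ]
  push_cast
  simp only [← mul_sum, sum_add_distrib, sum_const, card_univ, Fintype.card_fin, nsmul_eq_mul]
  linear_combination (A : ℚ) * hgauss

theorem stmt6_general (k n m : ℕ) (hn : 1 ≤ n) (hpos : 0 < C k n m) :
    (∑ π : Equiv.Perm (Fin n),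
        if π.cycleType.count k = m then ((π ⟨0, hn⟩ : Fin n) : ℚ) + 1 else 0)
        / C k n m
      = (n : ℚ) / 2 * (1 - (C k (n - 1) m : ℚ) / C k n m) + 1 := by
  obtain ⟨n, rfl⟩ := Nat.exists_eq_add_of_le' hn
  have hsum := two_mul_sum_filter_apply_zero_add_one (P := fun π : Perm (Fin (n + 1)) =>
    π.cycleType.count k = m) fun σ π h => by rwa [cycleType_conj]
  have hfix : #{π : Perm (Fin (n + 1)) | π.cycleType.count k = m ∧ π 0 = 0} = C k n m := by
    rw [C_eq_card, card_filter_cycleType_apply_self (·.count k = m) (finSuccAboveEquiv 0)]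
  rw [hfix, ← C_eq_card] at hsum
  have hC : (C k (n + 1) m : ℚ) ≠ 0 := by exact_mod_cast hpos.ne'
  rw [show (⟨0, hn⟩ : Fin (n + 1)) = 0 from rfl, ← sum_filter, Nat.add_sub_cancel]
  field_simp
  push_cast
  linear_combination hsum

theorem stmt6 (k n m : ℕ) (hk : 1 < k) (hn : 1 ≤ n) (hpos : 0 < C k n m) :
    (∑ π : Equiv.Perm (Fin n),
        if π.cycleType.count k = m then ((π ⟨0, hn⟩ : Fin n) : ℚ) + 1 else 0)
        / C k n m
      = (n : ℚ) / 2 * (1 - (C k (n - 1) m : ℚ) / C k n m) + 1 :=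
  stmt6_general k n m hn hpos
end

section
/- For all integers k > 1, n ≥ 1 and m ≥ 0 with C_k(n,m) > 0, if k does not divide n then the expected value of π(1) over permutations π ∈ S_n with exactly m k-cycles equals (n+1)/2. -/
/-!
Weight a permutation by `t ^ (number of its k-cycles)` and let `W_N` be the total weight of `S_N`.
Sorting permutations by the length `j + 1` of the cycle through a given point, and removing that
cycle one element at a time, yields `W_{N+1} = ∑_j N!/(N-j)! · t^[j+1 = k] · W_{N-j}`. For
`V_N = W_N / N!` this reads `N V_N = ∑_{i<N} V_i + (t - 1) V_{N-k}` (last term only if `k ≤ N`),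
and subtracting consecutive instances gives `(N+1)(V_{N+1} - V_N) = (t - 1)(V_{N+1-k} - V_{N-k})`.
By strong induction `V_{N+1} = V_N`, i.e. `W_{N+1} = (N+1) W_N`, whenever `k ∤ N+1`.

The permutations with `π 1 = 1` have weight `W_{n-1}`, and conjugating by a transposition that
fixes `1` permutes the other fibres of `π ↦ π 1`; so `W_n = n W_{n-1}` forces all fibres to have
the same weight. Taking the coefficient of `t^m`, `π 1` is uniformly distributed on the
permutations with `m` cycles of length `k`, and its mean is `(n + 1) / 2`.
-/

open Equiv Equiv.Perm Finset
open scoped Nat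

namespace Equiv.Perm

variable {α β : Type*} [DecidableEq α] [Fintype α] [DecidableEq β] [Fintype β]

theorem cycleType_permCongr_s7 (e : α ≃ β) (σ : Perm α) :
    (e.permCongr σ).cycleType = σ.cycleType := by
  let f : α ≃ {_b : β // True} := e.trans (Equiv.subtypeUnivEquiv fun _ => trivial).symm
  have : e.permCongr σ = σ.extendDomain f := by
    ext y
    rw [extendDomain_apply_subtype _ f trivial]
    simp [f, permCongr_apply]
  rw [this, cycleType_extendDomain]

theorem cycleType_eq_cycleType_cycleOf_add (σ : Perm α) (b : α) :
    σ.cycleType = (σ.cycleOf b).cycleType + (σ * (σ.cycleOf b)⁻¹).cycleType := by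
  by_cases hb : σ b = b
  · rw [(cycleOf_eq_one_iff σ).mpr hb, cycleType_one, zero_add, inv_one, mul_one]
  · have hc := cycleOf_mem_cycleFactorsFinset_iff.mpr (mem_support.mpr hb)
    rw [cycleType_mul_inv_mem_cycleFactorsFinset_eq_sub hc,
      add_tsub_cancel_of_le (cycleType_le_of_mem_cycleFactorsFinset hc)]

theorem count_cycleType_cycleOf {k : ℕ} (hk : k ≠ 1) (σ : Perm α) (b : α) :
    (σ.cycleOf b).cycleType.count k = if orderOf (σ.cycleOf b) = k then 1 else 0 := by
  by_cases hb : σ b = b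
  · rw [(cycleOf_eq_one_iff σ).mpr hb, cycleType_one, orderOf_one, if_neg (Ne.symm hk)]
    rfl
  · have hc := isCycle_cycleOf σ hb
    simp only [hc.cycleType, hc.orderOf, Multiset.count_singleton, eq_comm]

theorem orderOf_cycleOf_le_card (σ : Perm α) (b : α) :
    orderOf (σ.cycleOf b) ≤ Fintype.card α := by
  by_cases hb : σ b = b
  · rw [(cycleOf_eq_one_iff σ).mpr hb, orderOf_one]
    exact Fintype.card_pos_iff.mpr ⟨b⟩
  · rw [(isCycle_cycleOf σ hb).orderOf]
    exact card_le_univ _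

variable {σ : Perm α} {b z : α}

/- Multiplying by `swap (σ b) (σ (σ b))` on the left cuts `σ b` out of the cycle through `b`
(now `b ↦ σ (σ b)` and `σ b` is fixed) and leaves the other cycles alone. -/

theorem swap_mul_eq_swap_mul_cycleOf_mul (hb : σ b ≠ b) :
    swap (σ b) (σ (σ b)) * σ
      = (swap (σ b) (σ (σ b)) * σ.cycleOf b) * (σ * (σ.cycleOf b)⁻¹) := by
  have hd := disjoint_mul_inv_of_mem_cycleFactorsFinset
    (cycleOf_mem_cycleFactorsFinset_iff.mpr (mem_support.mpr hb))
  rw [mul_assoc, ← hd.commute.eq, inv_mul_cancel_right]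

theorem disjoint_swap_mul_cycleOf (hb : σ b ≠ b) :
    (swap (σ b) (σ (σ b)) * σ.cycleOf b).Disjoint (σ * (σ.cycleOf b)⁻¹) := by
  have hd := disjoint_mul_inv_of_mem_cycleFactorsFinset
    (cycleOf_mem_cycleFactorsFinset_iff.mpr (mem_support.mpr hb))
  refine hd.symm.mono (fun y hy => ?_) le_rfl
  rw [← cycleOf_apply_apply_self] at hy
  exact (mem_support_swap_mul_imp_mem_support_ne hy).1

theorem swap_mul_cycleOf_eq_one_or_isCycle (hb : σ b ≠ b) :
    (swap (σ b) (σ (σ b)) * σ.cycleOf b = 1 ∧ orderOf (σ.cycleOf b) = 2) ∨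
      ((swap (σ b) (σ (σ b)) * σ.cycleOf b).IsCycle ∧
        (swap (σ b) (σ (σ b)) * σ.cycleOf b) b ≠ b ∧
        orderOf (σ.cycleOf b) = orderOf (swap (σ b) (σ (σ b)) * σ.cycleOf b) + 1) := by
  set c := σ.cycleOf b
  have hc : c.IsCycle := isCycle_cycleOf σ hb
  have hcb : c b = σ b := cycleOf_apply_self σ b
  have hbc : b ∈ c.support := mem_support.mpr (hcb ▸ hb)
  have hx : c (σ b) ≠ σ b := by rw [← hcb]; exact c.injective.ne (hcb ▸ hb)
  rw [← cycleOf_apply_apply_self]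
  by_cases h : c (c (σ b)) = σ b
  · have hswap := hc.eq_swap_of_apply_apply_eq_self hx h
    left
    refine ⟨mul_eq_one_iff_inv_eq.mpr (by rw [swap_inv]; exact hswap.symm), ?_⟩
    rw [hc.orderOf, hswap, card_support_swap hx.symm]
  · right
    have hsupp := support_swap_mul_eq c (σ b) h
    have hc' := hc.swap_mul hx h
    refine ⟨hc', mem_support.mp ?_, ?_⟩
    · rw [hsupp, mem_sdiff, mem_singleton]
      exact ⟨hbc, fun h => hb h.symm⟩
    · have hpos := card_pos.mpr ⟨b, hbc⟩
      rw [hc.orderOf, hc'.orderOf, hsupp, sdiff_singleton_eq_erase,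
        card_erase_of_mem (mem_support.mpr hx)]
      omega

theorem cycleOf_swap_mul (hb : σ b ≠ b) :
    (swap (σ b) (σ (σ b)) * σ).cycleOf b = swap (σ b) (σ (σ b)) * σ.cycleOf b := by
  have hρb : (σ * (σ.cycleOf b)⁻¹) b = b := by
    refine notMem_support.mp ((disjoint_mul_inv_of_mem_cycleFactorsFinset ?_).symm.mem_imp ?_)
    · exact cycleOf_mem_cycleFactorsFinset_iff.mpr (mem_support.mpr hb)
    · exact mem_support.mpr (by rwa [cycleOf_apply_self])
  rw [swap_mul_eq_swap_mul_cycleOf_mul hb, (disjoint_swap_mul_cycleOf hb).cycleOf_mul_distrib,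
    (cycleOf_eq_one_iff _).mpr hρb, mul_one]
  rcases swap_mul_cycleOf_eq_one_or_isCycle hb with ⟨h1, -⟩ | ⟨hc', hc'b, -⟩
  · rw [h1, cycleOf_one]
  · exact hc'.cycleOf_eq hc'b

theorem orderOf_cycleOf_eq_orderOf_cycleOf_swap_mul_add_one (hz : σ b = z) (hzb : z ≠ b) :
    orderOf (σ.cycleOf b) = orderOf ((swap z (σ z) * σ).cycleOf b) + 1 := by
  subst hz
  rw [cycleOf_swap_mul hzb]
  rcases swap_mul_cycleOf_eq_one_or_isCycle hzb with ⟨h1, h2⟩ | ⟨-, -, h⟩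
  · rw [h1, h2, orderOf_one]
  · exact h

theorem swap_mul_mul_inv_cycleOf (hz : σ b = z) (hzb : z ≠ b) :
    swap z (σ z) * σ * ((swap z (σ z) * σ).cycleOf b)⁻¹ = σ * (σ.cycleOf b)⁻¹ := by
  subst hz
  rw [cycleOf_swap_mul hzb, swap_mul_eq_swap_mul_cycleOf_mul hzb,
    (disjoint_swap_mul_cycleOf hzb).commute.eq, mul_inv_cancel_right]

end Equiv.Perm

theorem Nat.descFactorial_succ_eq_mul_pred (n i : ℕ) :
    n.descFactorial (i + 1) = n * (n - 1).descFactorial i := by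
  cases n with
  | zero => rw [Nat.zero_descFactorial_succ, zero_mul]
  | succ n => rw [Nat.succ_descFactorial_succ, Nat.add_sub_cancel]

section CycleTypeSum

variable {α M : Type*} [DecidableEq α] [Fintype α] [AddCommMonoid M]

def cycleTypeSum (f : Multiset ℕ → M) (N : ℕ) : M := ∑ σ : Perm (Fin N), f σ.cycleType

theorem sum_cycleType_eq_cycleTypeSum (f : Multiset ℕ → M) :
    ∑ σ : Perm α, f σ.cycleType = cycleTypeSum f (Fintype.card α) :=
  Fintype.sum_equiv (Fintype.equivFin α).permCongr _ _ fun σ => by rw [cycleType_permCongr_s7]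

theorem sum_cycleType_fixing (f : Multiset ℕ → M) (S : Finset α) :
    ∑ σ : Perm α with ∀ y ∈ S, σ y = y, f σ.cycleType
      = cycleTypeSum f (Fintype.card α - #S) := by
  rw [Finset.sum_subtype (p := fun σ : Perm α => ∀ a, ¬ (a ∉ S) → σ a = a) _ (by simp),
    ← Fintype.sum_equiv (Perm.subtypeEquivSubtypePerm fun a => a ∉ S)
      (fun ρ => f ρ.cycleType) _ (fun ρ => by simp [cycleType_ofSubtype]),
    sum_cycleType_eq_cycleTypeSum, Fintype.card_subtype_compl, Fintype.card_coe]

/-- `σ * (σ.cycleOf b)⁻¹` is `σ` with the cycle through `b` deleted. -/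
theorem sum_swap_mul_eq_sum_fixing_insert (g : Perm α → M) {S : Finset α} {b z : α}
    (hbS : b ∉ S) (hzS : z ∉ S) (hzb : z ≠ b) (j : ℕ) :
    ∑ σ : Perm α with ((∀ y ∈ S, σ y = y) ∧ orderOf (σ.cycleOf b) = j + 1) ∧ σ b = z,
        g (σ * (σ.cycleOf b)⁻¹)
      = ∑ τ : Perm α with (∀ y ∈ insert z S, τ y = y) ∧ orderOf (τ.cycleOf b) = j,
        g (τ * (τ.cycleOf b)⁻¹) := by
  refine sum_nbij' (fun σ => swap z (σ z) * σ) (fun τ => swap z (τ b) * τ) ?_ ?_ ?_ ?_ ?_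
  · simp only [mem_filter, mem_univ, true_and, forall_mem_insert]
    rintro σ ⟨⟨hS, hj⟩, hz⟩
    refine ⟨⟨by simp, fun y hy => ?_⟩, ?_⟩
    · have hyz : y ≠ z := fun h => hzS (h ▸ hy)
      have hσz : σ z ≠ y := fun h => hyz (σ.injective (h.trans (hS y hy).symm)).symm
      rw [mul_apply, hS y hy, swap_apply_of_ne_of_ne hyz hσz.symm]
    · have := orderOf_cycleOf_eq_orderOf_cycleOf_swap_mul_add_one hz hzb
      omega
  · simp only [mem_filter, mem_univ, true_and, forall_mem_insert]
    rintro τ ⟨⟨hz, hS⟩, hj⟩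
    have hσb : (swap z (τ b) * τ) b = z := by rw [mul_apply, swap_apply_right]
    refine ⟨⟨fun y hy => ?_, ?_⟩, hσb⟩
    · have hyz : y ≠ z := fun h => hzS (h ▸ hy)
      have hτb : τ b ≠ y := fun h => hbS (τ.injective (h.trans (hS y hy).symm) ▸ hy)
      rw [mul_apply, hS y hy, swap_apply_of_ne_of_ne hyz hτb.symm]
    · have := orderOf_cycleOf_eq_orderOf_cycleOf_swap_mul_add_one hσb hzb
      rwa [mul_apply, hz, swap_apply_left, swap_mul_self_mul, hj] at this
  · simp only [mem_filter, mem_univ, true_and]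
    rintro σ ⟨-, hz⟩
    rw [mul_apply, hz, swap_apply_left, swap_mul_self_mul]
  · simp only [mem_filter, mem_univ, true_and, forall_mem_insert]
    rintro τ ⟨⟨hz, -⟩, -⟩
    rw [mul_apply, hz, swap_apply_left, swap_mul_self_mul]
  · simp only [mem_filter, mem_univ, true_and]
    rintro σ ⟨-, hz⟩
    rw [swap_mul_mul_inv_cycleOf hz hzb]

theorem sum_cycleType_mul_inv_cycleOf_eq_descFactorial_smul (f : Multiset ℕ → M) (i : ℕ)
    {S : Finset α} {b : α} (hbS : b ∉ S) :
    ∑ σ : Perm α with (∀ y ∈ S, σ y = y) ∧ orderOf (σ.cycleOf b) = i + 1,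
        f (σ * (σ.cycleOf b)⁻¹).cycleType
      = (Fintype.card α - #S - 1).descFactorial i
          • cycleTypeSum f (Fintype.card α - #S - (i + 1)) := by
  induction i generalizing S with
  | zero =>
    have hfix : ∀ σ : Perm α, ((∀ y ∈ S, σ y = y) ∧ orderOf (σ.cycleOf b) = 0 + 1)
        ↔ ∀ y ∈ insert b S, σ y = y := by
      simp [orderOf_eq_one_iff, cycleOf_eq_one_iff, and_comm]
    rw [Nat.descFactorial_zero, one_smul, zero_add, Nat.sub_sub, ← card_insert_of_notMem hbS,
      ← sum_cycleType_fixing, filter_congr fun σ _ => hfix σ]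
    refine sum_congr rfl fun σ hσ => ?_
    rw [(cycleOf_eq_one_iff σ).mpr ((mem_filter.mp hσ).2 b (mem_insert_self b S)), inv_one,
      mul_one]
  | succ i ih =>
    have hmaps : ∀ σ ∈ ({σ | (∀ y ∈ S, σ y = y) ∧ orderOf (σ.cycleOf b) = i + 1 + 1} :
        Finset (Perm α)), σ b ∈ (insert b S)ᶜ := by
      simp only [mem_filter, mem_univ, true_and, mem_compl, mem_insert, not_or]
      rintro σ ⟨hS, hord⟩
      have hσb : σ b ≠ b := fun h => by
        rw [← cycleOf_eq_one_iff, ← orderOf_eq_one_iff] at h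
        omega
      exact ⟨hσb, fun h => hbS (σ.injective (hS _ h) ▸ h)⟩
    have hfibre : ∀ z ∈ (insert b S)ᶜ,
        ∑ σ ∈ ({σ | (∀ y ∈ S, σ y = y) ∧ orderOf (σ.cycleOf b) = i + 1 + 1} :
            Finset (Perm α)) with σ b = z, f (σ * (σ.cycleOf b)⁻¹).cycleType
          = (Fintype.card α - #S - 1 - 1).descFactorial i
              • cycleTypeSum f (Fintype.card α - #S - (i + 1 + 1)) := by
      intro z hz
      simp only [mem_compl, mem_insert, not_or] at hz
      rw [filter_filter]
      refine (sum_swap_mul_eq_sum_fixing_insert (fun ρ => f ρ.cycleType) hbS hz.2 hz.1 _).trans ?_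
      rw [ih (by simp [hbS, Ne.symm hz.1]), card_insert_of_notMem hz.2]
      congr 2; omega
    rw [← sum_fiberwise_of_maps_to hmaps, sum_congr rfl hfibre, sum_const, card_compl,
      card_insert_of_notMem hbS, smul_smul, Nat.descFactorial_succ_eq_mul_pred, Nat.sub_add_eq]

end CycleTypeSum

section Recurrence

variable {α R : Type*} [DecidableEq α] [Fintype α] [CommRing R]

theorem sum_pow_count_cycleType (t : R) {k : ℕ} (hk : k ≠ 1) (b : α) :
    ∑ σ : Perm α, t ^ σ.cycleType.count k
      = ∑ i ∈ range (Fintype.card α), (Fintype.card α - 1).descFactorial i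
          • ((if i + 1 = k then t else 1)
            * cycleTypeSum (fun μ => t ^ μ.count k) (Fintype.card α - (i + 1))) := by
  have hmaps : ∀ σ ∈ (univ : Finset (Perm α)),
      orderOf (σ.cycleOf b) - 1 ∈ range (Fintype.card α) := fun σ _ => by
    have := orderOf_cycleOf_le_card σ b
    have := orderOf_pos (σ.cycleOf b)
    exact mem_range.mpr (by omega)
  rw [← sum_fiberwise_of_maps_to hmaps]
  refine sum_congr rfl fun i _ => ?_
  have hfilter : ∀ σ : Perm α, orderOf (σ.cycleOf b) - 1 = i
      ↔ (∀ y ∈ (∅ : Finset α), σ y = y) ∧ orderOf (σ.cycleOf b) = i + 1 := fun σ => by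
    have := orderOf_pos (σ.cycleOf b)
    simp only [notMem_empty, IsEmpty.forall_iff, implies_true, true_and]
    omega
  have hsplit : ∀ σ ∈ ({σ | (∀ y ∈ (∅ : Finset α), σ y = y) ∧
      orderOf (σ.cycleOf b) = i + 1} : Finset (Perm α)),
      t ^ σ.cycleType.count k
        = (if i + 1 = k then t else 1) * t ^ (σ * (σ.cycleOf b)⁻¹).cycleType.count k := by
    intro σ hσ
    rw [cycleType_eq_cycleType_cycleOf_add σ b, Multiset.count_add, count_cycleType_cycleOf hk,
      (mem_filter.mp hσ).2.2, pow_add]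
    split_ifs <;> simp
  rw [filter_congr fun σ _ => hfilter σ, sum_congr rfl hsplit, ← mul_sum,
    sum_cycleType_mul_inv_cycleOf_eq_descFactorial_smul (fun μ => t ^ μ.count k) i
      (notMem_empty b), card_empty, Nat.sub_zero, mul_smul_comm]

theorem cycleTypeSum_pow_count_succ (t : R) {k : ℕ} (hk : k ≠ 1) (N : ℕ) :
    cycleTypeSum (fun μ => t ^ μ.count k) (N + 1)
      = ∑ i ∈ range (N + 1), N.descFactorial i
          • ((if i + 1 = k then t else 1) * cycleTypeSum (fun μ => t ^ μ.count k) (N - i)) := by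
  rw [cycleTypeSum, sum_pow_count_cycleType t hk (0 : Fin (N + 1)), Fintype.card_fin,
    Nat.add_sub_cancel]
  refine sum_congr rfl fun i _ => ?_
  rw [Nat.add_sub_add_right]

theorem sum_range_ite_sub_eq (t : R) (V : ℕ → R) {k : ℕ} (hk : k ≠ 0) (n : ℕ) :
    ∑ i ∈ range n, (if n - i = k then t else 1) * V i
      = ∑ i ∈ range n, V i + if k ≤ n then (t - 1) * V (n - k) else 0 := by
  have hsplit : ∀ i ∈ range n, (if n - i = k then t else 1) * V i
      = V i + if i = n - k ∧ k ≤ n then (t - 1) * V i else 0 := fun i hi => by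
    have := mem_range.mp hi
    by_cases h : n - i = k
    · rw [if_pos h, if_pos ⟨by omega, by omega⟩]; ring
    · rw [if_neg h, if_neg (by omega)]; ring
  rw [sum_congr rfl hsplit, sum_add_distrib]
  congr 1
  split_ifs with hkn
  · simp only [hkn, and_true]
    rw [sum_ite_eq' (range n) (n - k) fun i => (t - 1) * V i, if_pos (mem_range.mpr (by omega))]
  · simp [hkn]

variable [Algebra ℚ R]

theorem succ_eq_of_smul_eq_sum_ite (t : R) (V : ℕ → R) {k : ℕ} (hk : k ≠ 0)
    (hV : ∀ n : ℕ, (n : ℚ) • V n = ∑ i ∈ range n, (if n - i = k then t else 1) * V i)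
    (N : ℕ) (hN : ¬ k ∣ N + 1) : V (N + 1) = V N := by
  induction N using Nat.strong_induction_on with
  | _ N ih =>
  have hdiff : ((N + 1 : ℕ) : ℚ) • (V (N + 1) - V N)
      = (if k ≤ N + 1 then (t - 1) * V (N + 1 - k) else 0)
        - (if k ≤ N then (t - 1) * V (N - k) else 0) := by
    have h1 := hV (N + 1)
    have h0 := hV N
    rw [sum_range_ite_sub_eq t V hk, sum_range_succ] at h1
    rw [sum_range_ite_sub_eq t V hk] at h0
    rw [smul_sub, h1, Nat.cast_succ, add_smul, one_smul, h0]
    ring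
  have hzero : (if k ≤ N + 1 then (t - 1) * V (N + 1 - k) else 0)
      = (if k ≤ N then (t - 1) * V (N - k) else 0) := by
    by_cases hkN : k ≤ N
    · have hlt : N - k < N := by omega
      have hdvd : ¬ k ∣ N - k + 1 := fun h =>
        hN (by rw [show N + 1 = N - k + 1 + k by omega]; exact h.add dvd_rfl)
      rw [if_pos (by omega), if_pos hkN, show N + 1 - k = N - k + 1 by omega, ih _ hlt hdvd]
    · have : k ≠ N + 1 := fun h => hN (h ▸ dvd_rfl)
      rw [if_neg (by omega), if_neg hkN]
  rw [hzero, sub_self] at hdiff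
  exact sub_eq_zero.mp ((smul_eq_zero.mp hdiff).resolve_left (by positivity))

theorem factorial_inv_smul_cycleTypeSum_pow_count (t : R) {k : ℕ} (hk : k ≠ 1) (n : ℕ) :
    (n : ℚ) • ((n ! : ℚ)⁻¹ • cycleTypeSum (fun μ => t ^ μ.count k) n)
      = ∑ i ∈ range n, (if n - i = k then t else 1)
          * ((i ! : ℚ)⁻¹ • cycleTypeSum (fun μ => t ^ μ.count k) i) := by
  rcases n with _ | N
  · simp
  have hfac : ∀ j ≤ N, (N ! : ℚ)⁻¹ * N.descFactorial j = ((N - j)! : ℚ)⁻¹ := by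
    intro j hj
    rw [← Nat.factorial_mul_descFactorial hj, Nat.cast_mul]
    have : (N.descFactorial j : ℚ) ≠ 0 := by
      exact_mod_cast (Nat.descFactorial_pos.mpr hj).ne'
    field_simp
  rw [smul_smul, Nat.factorial_succ, Nat.cast_mul, mul_inv, ← mul_assoc, Nat.cast_succ,
    mul_inv_cancel₀ (by positivity), one_mul, cycleTypeSum_pow_count_succ t hk, smul_sum]
  conv_rhs => rw [← sum_range_reflect]
  refine sum_congr rfl fun j hj => ?_
  have hj := mem_range.mp hj
  rw [show N + 1 - (N + 1 - 1 - j) = j + 1 by omega, show N + 1 - 1 - j = N - j by omega,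
    ← Nat.cast_smul_eq_nsmul ℚ, smul_smul, hfac j (by omega), mul_smul_comm]

theorem cycleTypeSum_pow_count_succ_eq_mul (t : R) {k : ℕ} (hk : 1 < k) {N : ℕ}
    (hN : ¬ k ∣ N + 1) :
    cycleTypeSum (fun μ => t ^ μ.count k) (N + 1)
      = (N + 1) • cycleTypeSum (fun μ => t ^ μ.count k) N := by
  have h := succ_eq_of_smul_eq_sum_ite t _ (by omega)
    (factorial_inv_smul_cycleTypeSum_pow_count t hk.ne') N hN
  have hfac : ((N + 1)! : ℚ) ≠ 0 := by positivity
  set W := cycleTypeSum (fun μ => t ^ μ.count k)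
  calc W (N + 1) = ((N + 1)! : ℚ) • (((N + 1)! : ℚ)⁻¹ • W (N + 1)) := by
        rw [smul_smul, mul_inv_cancel₀ hfac, one_smul]
    _ = ((N + 1)! : ℚ) • ((N ! : ℚ)⁻¹ • W N) := by rw [h]
    _ = (N + 1) • W N := by
        rw [smul_smul, Nat.factorial_succ, Nat.cast_mul, mul_assoc,
          mul_inv_cancel₀ (by positivity), mul_one, Nat.cast_smul_eq_nsmul]

end Recurrence

section Fibres

variable {α M R : Type*} [DecidableEq α] [Fintype α] [AddCommMonoid M] [CommRing R]

theorem sum_cycleType_of_apply_eq_conj (f : Multiset ℕ → M) {g : Perm α} {x : α}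
    (hgx : g x = x) (a : α) :
    ∑ σ : Perm α with σ x = g a, f σ.cycleType
      = ∑ σ : Perm α with σ x = a, f σ.cycleType := by
  refine sum_nbij' (fun σ => g⁻¹ * σ * g) (fun τ => g * τ * g⁻¹) ?_ ?_ ?_ ?_ ?_ <;>
    simp only [mem_filter, mem_univ, true_and]
  · intro σ hσ
    simp [hgx, hσ]
  · intro τ hτ
    have hgx' : g⁻¹ x = x := by rw [Perm.inv_eq_iff_eq, hgx]
    rw [mul_apply, mul_apply, hgx', hτ]
  · intro σ _
    group
  · intro τ _
    group
  · intro σ _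
    have := cycleType_conj (σ := σ) (τ := g⁻¹)
    rw [inv_inv] at this
    rw [this]

theorem sum_pow_count_cycleType_of_apply_eq [Algebra ℚ R] (t : R) {k : ℕ} (hk : 1 < k)
    (hα : ¬ k ∣ Fintype.card α) (x a : α) :
    ∑ σ : Perm α with σ x = a, t ^ σ.cycleType.count k
      = cycleTypeSum (fun μ => t ^ μ.count k) (Fintype.card α - 1) := by
  set w : Multiset ℕ → R := fun μ => t ^ μ.count k
  have hfix :
      ∑ σ : Perm α with σ x = x, w σ.cycleType = cycleTypeSum w (Fintype.card α - 1) := by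
    rw [← card_singleton x, ← sum_cycleType_fixing]
    simp
  by_cases hax : a = x
  · rw [hax, hfix]
  have hmove : ∀ a' ∈ univ.erase x, ∑ σ : Perm α with σ x = a', w σ.cycleType
      = ∑ σ : Perm α with σ x = a, w σ.cycleType := fun a' ha' => by
    have hx : swap a a' x = x := swap_apply_of_ne_of_ne (Ne.symm hax) (mem_erase.mp ha').1.symm
    rw [← sum_cycleType_of_apply_eq_conj w hx a, swap_apply_left]
  have htotal := sum_cycleType_eq_cycleTypeSum (α := α) w
  rw [← sum_fiberwise_of_maps_to (g := fun σ : Perm α => σ x) (t := univ)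
      (fun _ _ => mem_univ _), ← add_sum_erase _ _ (mem_univ x), sum_congr rfl hmove, sum_const,
    card_erase_of_mem (mem_univ x), Finset.card_univ] at htotal
  obtain ⟨N, hN⟩ : ∃ N, Fintype.card α = N + 1 :=
    ⟨Fintype.card α - 1, (Nat.sub_add_cancel (Fintype.card_pos_iff.mpr ⟨x⟩)).symm⟩
  have hN0 : (N : ℚ) ≠ 0 := by
    have := Finset.card_le_univ {a, x}
    rw [card_pair hax, hN] at this
    exact_mod_cast (show N ≠ 0 by omega)
  rw [hfix, hN, cycleTypeSum_pow_count_succ_eq_mul t hk (hN ▸ hα), succ_nsmul',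
    Nat.add_sub_cancel, add_right_inj, ← Nat.cast_smul_eq_nsmul ℚ,
    ← Nat.cast_smul_eq_nsmul ℚ] at htotal
  rw [hN, Nat.add_sub_cancel]
  exact smul_right_injective R hN0 htotal

end Fibres

open Polynomial in
theorem Polynomial.coeff_sum_X_pow {R ι : Type*} [Semiring R] (s : Finset ι) (g : ι → ℕ)
    (m : ℕ) : (∑ i ∈ s, (X : R[X]) ^ g i).coeff m = #{i ∈ s | g i = m} := by
  simp [coeff_X_pow, eq_comm]

theorem card_filter_count_cycleType_apply_eq {α : Type*} [DecidableEq α] [Fintype α] {k : ℕ}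
    (hk : 1 < k) (hα : ¬ k ∣ Fintype.card α) (m : ℕ) (x a : α) :
    (#{σ : Perm α | σ.cycleType.count k = m ∧ σ x = a} : ℚ)
      = (cycleTypeSum (fun μ => (Polynomial.X : Polynomial ℚ) ^ μ.count k)
          (Fintype.card α - 1)).coeff m := by
  rw [← sum_pow_count_cycleType_of_apply_eq _ hk hα x a, Polynomial.coeff_sum_X_pow,
    filter_filter]
  simp only [and_comm]

theorem sum_ite_comp_eq_mul_sum {α β : Type*} [Fintype α] [DecidableEq α] [Fintype β]
    (P : β → Prop) [DecidablePred P] (f : β → α) {F : ℚ}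
    (hF : ∀ a, (#{b | P b ∧ f b = a} : ℚ) = F) (g : α → ℚ) :
    ∑ b, (if P b then g (f b) else 0) = F * ∑ a, g a := by
  rw [← sum_filter, ← sum_fiberwise_of_maps_to (g := f) (t := univ) (by simp), mul_sum]
  refine sum_congr rfl fun a _ => ?_
  rw [sum_congr rfl fun b hb => by rw [(mem_filter.mp hb).2], sum_const, filter_filter,
    nsmul_eq_mul, hF]

theorem sum_fin_val_add_one (n : ℕ) : ∑ a : Fin n, ((a : ℚ) + 1) = n * (n + 1) / 2 := by
  have h := Finset.sum_range_id_mul_two (n + 1)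
  rw [sum_range_succ'] at h
  rw [Fin.sum_univ_eq_sum_range (fun i => (i : ℚ) + 1)]
  have : ((∑ i ∈ range n, (i + 1) : ℕ) : ℚ) * 2 = ((n + 1) * n : ℕ) := by exact_mod_cast h
  push_cast at this
  linarith

theorem stmt7 (k n m : ℕ) (hk : 1 < k) (hn : 1 ≤ n) (hpos : 0 < C k n m)
    (hkn : ¬ k ∣ n) :
    (∑ π : Equiv.Perm (Fin n),
        if π.cycleType.count k = m then ((π ⟨0, hn⟩ : Fin n) : ℚ) + 1 else 0)
        / C k n m
      = ((n : ℚ) + 1) / 2 := by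
  have hfibre :=
    card_filter_count_cycleType_apply_eq hk (by rwa [Fintype.card_fin]) m (⟨0, hn⟩ : Fin n)
  set F := (cycleTypeSum (fun μ => (Polynomial.X : Polynomial ℚ) ^ μ.count k)
    (Fintype.card (Fin n) - 1)).coeff m
  have hC : (C k n m : ℚ) = F * n := by
    have h := sum_ite_comp_eq_mul_sum _ _ hfibre fun _ => 1
    rw [sum_boole, sum_const, card_univ, Fintype.card_fin, nsmul_one] at h
    rw [C, Nat.card_eq_fintype_card, Fintype.card_subtype, h]
  have hF : F ≠ 0 := left_ne_zero_of_mul (hC ▸ (Nat.cast_pos.mpr hpos).ne')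
  have hn0 : (n : ℚ) ≠ 0 := by exact_mod_cast (show n ≠ 0 by omega)
  rw [sum_ite_comp_eq_mul_sum _ _ hfibre fun a => (a : ℚ) + 1, hC, sum_fin_val_add_one]
  field_simp
end

section
/- For all integers k > 1 and n ≥ 0, the number of derangements of the generalized symmetric group S(k,n) is D(k,n) = k^n·n!·Σ_{i=0}^{n} (-1)^i/(k^i·i!). -/
/-!
Inclusion–exclusion over the events "`i` is a fixed point", i.e. `π i = i ∧ xᵢ = 0`. The elements
having every `i ∈ t` as a fixed point are the pairs with `x` vanishing on `t` and `π` fixing `t`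
pointwise; there are `k ^ (n - #t) * (n - #t)!` of them. Grouping the subsets `t` by size gives
`D(k, n) = ∑ⱼ (-1)ʲ (n choose j) k ^ (n - j) (n - j)!`, and `(n choose j) (n - j)! = n! / j!`.
-/

/-- `D k n` is the number of derangements (fixed-point-free elements) of the
generalized symmetric group `S(k, n) = (ℤ/kℤ) ≀ Sₙ`: pairs `((x₁,…,xₙ), π)`
such that for every `i`, either `π i ≠ i` or `xᵢ ≠ 0`. -/
noncomputable def D (k n : ℕ) : ℕ :=
  Nat.card {p : (Fin n → ZMod k) × Equiv.Perm (Fin n) // ∀ i, p.2 i ≠ i ∨ p.1 i ≠ 0}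

open Finset Equiv

section
variable {ι R : Type*} [Fintype ι] [DecidableEq ι]

theorem card_filter_forall_mem_eq_zero [Fintype R] [DecidableEq R] [Zero R] (t : Finset ι) :
    #{x : ι → R | ∀ i ∈ t, x i = 0} = Fintype.card R ^ (Fintype.card ι - #t) := by
  have : ({x : ι → R | ∀ i ∈ t, x i = 0} : Finset _) =
      Fintype.piFinset fun i ↦ if i ∈ t then {0} else univ := by
    ext x
    simp only [mem_filter, mem_univ, true_and, Fintype.mem_piFinset]
    refine forall_congr' fun i ↦ ?_
    split_ifs <;> simp [*]
  rw [this, Fintype.card_piFinset]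
  simp only [apply_ite Finset.card, card_singleton, card_univ]
  rw [prod_ite, prod_const_one, one_mul, prod_const, filter_not,
    card_sdiff_of_subset (subset_univ _), card_univ, filter_mem_eq_inter, univ_inter]

theorem card_perm_fixing (t : Finset ι) :
    #{σ : Perm ι | ∀ i ∈ t, σ i = i} = (Fintype.card ι - #t).factorial := by
  rw [← Fintype.card_subtype, ← card_compl, ← Fintype.card_coe tᶜ, ← Fintype.card_perm]
  refine Fintype.card_congr <| (subtypeEquivRight fun σ ↦ ?_).trans
    (Perm.subtypeEquivSubtypePerm (· ∈ tᶜ)).symm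
  simp

variable (R) [Fintype R] [DecidableEq R] [Zero R]

def fixingAt (i : ι) : Finset ((ι → R) × Perm ι) := {p | p.2 i = i ∧ p.1 i = 0}

theorem card_inf_fixingAt (t : Finset ι) :
    #(t.inf (fixingAt R)) =
      Fintype.card R ^ (Fintype.card ι - #t) * (Fintype.card ι - #t).factorial := by
  have : t.inf (fixingAt R) =
      ({x | ∀ i ∈ t, x i = 0} : Finset (ι → R)) ×ˢ ({σ | ∀ i ∈ t, σ i = i} : Finset (Perm ι)) := by
    ext p
    simp [fixingAt, mem_inf, forall_and, and_comm]
  rw [this, card_product, card_filter_forall_mem_eq_zero, card_perm_fixing]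

theorem card_wreath_derangements :
    (Nat.card {p : (ι → R) × Perm ι // ∀ i, p.2 i ≠ i ∨ p.1 i ≠ 0} : ℤ) =
      ∑ j ∈ range (Fintype.card ι + 1), (-1 : ℤ) ^ j * (Fintype.card ι).choose j *
        (Fintype.card R ^ (Fintype.card ι - j) * (Fintype.card ι - j).factorial : ℕ) := by
  have : ({p : (ι → R) × Perm ι | ∀ i, p.2 i ≠ i ∨ p.1 i ≠ 0} : Finset _) =
      univ.inf fun i ↦ (fixingAt R i)ᶜ := by
    ext p
    simp [fixingAt, mem_inf, imp_iff_not_or]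
  rw [Nat.card_eq_fintype_card, Fintype.card_subtype, this, inclusion_exclusion_card_inf_compl]
  simp only [card_inf_fixingAt]
  rw [sum_powerset_apply_card (fun j ↦ (-1 : ℤ) ^ j *
    (Fintype.card R ^ (Fintype.card ι - j) * (Fintype.card ι - j).factorial : ℕ)), card_univ]
  refine sum_congr rfl fun j _ ↦ ?_
  rw [nsmul_eq_mul]
  ring

end

theorem sum_choose_mul_pow_mul_factorial {K : Type*} [Field K] [CharZero K] {k : K} (hk : k ≠ 0)
    (n : ℕ) :
    ∑ j ∈ range (n + 1), (-1) ^ j * n.choose j * (k ^ (n - j) * (n - j).factorial) =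
      k ^ n * n.factorial * ∑ j ∈ range (n + 1), (-1) ^ j / (k ^ j * j.factorial) := by
  rw [mul_sum]
  refine sum_congr rfl fun j hj ↦ ?_
  obtain ⟨m, rfl⟩ := Nat.exists_eq_add_of_le (Nat.lt_succ_iff.mp (mem_range.mp hj))
  rw [Nat.add_sub_cancel_left, ← Nat.choose_mul_factorial_mul_factorial (Nat.le_add_right j m),
    Nat.add_sub_cancel_left]
  have : (j.factorial : K) ≠ 0 := Nat.cast_ne_zero.mpr j.factorial_ne_zero
  push_cast
  field_simp
  ring

theorem stmt10 (k n : ℕ) (hk : 1 < k) :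
    (D k n : ℚ) =
      k ^ n * n.factorial *
        ∑ i ∈ Finset.range (n + 1), (-1 : ℚ) ^ i / (k ^ i * i.factorial) := by
  have : NeZero k := ⟨by omega⟩
  have hD := card_wreath_derangements (ZMod k) (ι := Fin n)
  rw [ZMod.card, Fintype.card_fin] at hD
  rw [← sum_choose_mul_pow_mul_factorial (Nat.cast_ne_zero.mpr (NeZero.ne k)), D]
  exact_mod_cast hD
end

section
/- For all integers k ≥ 2, n ≥ 0 and 0 ≤ m ≤ n, the proportion of permutations in S_{kn} with exactly m k-cycles equals the proportion of elements of S(k,n) with exactly m fixed points: C_k(kn,m)/(kn)! = binom(n,m)·D(k,n-m)/(k^n·n!); equivalently, k^n·n!·C_k(kn,m) = (kn)!·binom(n,m)·D(k,n-m). -/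
open Finset Function

def binomialMoment {X : Type*} [Fintype X] (f : X → ℕ) (j : ℕ) : ℕ :=
  ∑ x, (f x).choose j

lemma alternating_sum_choose_mul_choose {n t : ℕ} (m : ℕ) (ht : t ≤ n) :
    ∑ i ∈ range (n - m + 1), (-1 : ℤ) ^ i * (m + i).choose m * t.choose (m + i) =
      if t = m then 1 else 0 := by
  have hterm (i : ℕ) :
      ((m + i).choose m : ℤ) * t.choose (m + i) = t.choose m * (t - m).choose i := by
    have h := Nat.choose_mul (n := t) (Nat.le_add_right m i)
    rw [Nat.add_sub_cancel_left] at h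
    rw [mul_comm]
    exact_mod_cast h
  simp_rw [mul_assoc, hterm, mul_left_comm _ (t.choose m : ℤ), ← mul_sum]
  rcases lt_or_ge t m with htm | hmt
  · simp [Nat.choose_eq_zero_of_lt htm, htm.ne]
  have hsub : ∑ i ∈ range (t - m + 1), (-1 : ℤ) ^ i * (t - m).choose i =
      ∑ i ∈ range (n - m + 1), (-1 : ℤ) ^ i * (t - m).choose i :=
    sum_subset (Finset.range_subset_range.2 (by omega)) fun i _ hi => by
      simp [Nat.choose_eq_zero_of_lt (show t - m < i by simpa using hi)]
  rw [← hsub, Int.alternating_sum_range_choose]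
  rcases hmt.eq_or_lt with rfl | hlt
  · simp
  · simp [(Nat.sub_pos_of_lt hlt).ne', hlt.ne']

lemma card_filter_eq_sum_binomialMoment {X : Type*} [Fintype X] (f : X → ℕ) {n : ℕ}
    (hf : ∀ x, f x ≤ n) (m : ℕ) :
    (#{x | f x = m} : ℤ) =
      ∑ i ∈ range (n - m + 1),
        (-1 : ℤ) ^ i * (m + i).choose m * binomialMoment f (m + i) := by
  simp only [binomialMoment, Nat.cast_sum, mul_sum]
  rw [sum_comm]
  simp_rw [alternating_sum_choose_mul_choose m (hf _)]
  simp

section Counting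

variable {ι α β : Type*} [Fintype ι] [Fintype α] [DecidableEq α]

lemma card_injective [DecidableEq ι] :
    #{g : ι → α | Injective g} = (Fintype.card α).descFactorial (Fintype.card ι) := by
  rw [← Fintype.card_subtype, Fintype.card_congr (Equiv.subtypeInjectiveEquivEmbedding ι α),
    Fintype.card_embedding_eq]

lemma card_injective_mapsTo [DecidableEq ι] (s : Finset α) :
    #{g : ι → α | Injective g ∧ ∀ x, g x ∈ s} = (#s).descFactorial (Fintype.card ι) := by
  have e : {g : ι → α // Injective g ∧ ∀ x, g x ∈ s} ≃ {g : ι → s // Injective g} :=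
    { toFun g := ⟨fun x => ⟨g.1 x, g.2.2 x⟩, fun a b h => g.2.1 (congrArg Subtype.val h)⟩
      invFun g := ⟨fun x => g.1 x, fun a b h => g.2 (Subtype.ext h), fun x => (g.1 x).2⟩
      left_inv _ := rfl
      right_inv _ := rfl }
  rw [← Fintype.card_subtype, Fintype.card_congr e, Fintype.card_subtype, card_injective,
    Fintype.card_coe]

lemma card_perm_fixing_s13 {g : ι → α} (hg : Injective g) :
    #{σ : Equiv.Perm α | ∀ x, σ (g x) = g x} =
      (Fintype.card α - Fintype.card ι).factorial := by
  have e : {σ : Equiv.Perm α // ∀ x, σ (g x) = g x} ≃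
      {σ : Equiv.Perm α // ∀ a, ¬(a ∉ Set.range g) → σ a = a} :=
    Equiv.subtypeEquivRight fun σ => by simp
  rw [← Fintype.card_subtype, Fintype.card_congr
      (e.trans (Equiv.Perm.subtypeEquivSubtypePerm _).symm), Fintype.card_perm,
    Fintype.card_subtype_compl, Set.card_range_of_injective hg]

lemma card_perm_semiconj (e : Equiv.Perm ι) {g : ι → α} (hg : Injective g) :
    #{σ : Equiv.Perm α | ∀ x, σ (g x) = g (e x)} =
      (Fintype.card α - Fintype.card ι).factorial := by
  set c := e.viaEmbedding ⟨g, hg⟩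
  have hc (x : ι) : c (g x) = g (e x) := Equiv.Perm.viaEmbedding_apply e ⟨g, hg⟩ x
  rw [← card_perm_fixing_s13 hg]
  refine card_nbij' (c⁻¹ * ·) (c * ·) (fun σ hσ => ?_) (fun σ hσ => ?_)
    (fun σ _ => mul_inv_cancel_left c σ) (fun σ _ => inv_mul_cancel_left c σ)
  · simp only [coe_filter, Set.mem_ofPred_eq, mem_univ, true_and] at hσ ⊢
    intro x
    rw [Equiv.Perm.mul_apply, hσ, ← hc]
    exact c.symm_apply_apply _
  · simp only [coe_filter, Set.mem_ofPred_eq, mem_univ, true_and] at hσ ⊢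
    intro x
    rw [Equiv.Perm.mul_apply, hσ, hc]

lemma card_fun_eq_on_range [Fintype β] [DecidableEq β] {g : ι → α} (hg : Injective g)
    (b : β) :
    #{v : α → β | ∀ x, v (g x) = b} =
      Fintype.card β ^ (Fintype.card α - Fintype.card ι) := by
  have e : {v : α → β // ∀ x, v (g x) = b} ≃ ({a : α // a ∉ Set.range g} → β) :=
    { toFun v a := v.1 a
      invFun w := ⟨fun a => if h : a ∈ Set.range g then b else w ⟨a, h⟩,
        fun x => dif_pos ⟨x, rfl⟩⟩
      left_inv v := Subtype.ext <| funext fun a => by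
        by_cases h : a ∈ Set.range g
        · obtain ⟨x, rfl⟩ := h
          simp [v.2 x]
        · simp [h]
      right_inv w := funext fun a => dif_neg a.2 }
  rw [← Fintype.card_subtype, Fintype.card_congr e, Fintype.card_fun,
    Fintype.card_subtype_compl, Set.card_range_of_injective hg]

end Counting

section DoubleCounting

variable {ι α X : Type*} [Fintype ι] [DecidableEq ι] [Fintype α] [DecidableEq α] [Fintype X]

lemma sum_eq_descFactorial_mul_of_card_fibers (R : (ι → α) → X → Prop)
    [∀ g x, Decidable (R g x)] {f : X → ℕ} {c : ℕ}
    (hX : ∀ x, #{g | Injective g ∧ R g x} = f x)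
    (hI : ∀ g, Injective g → #{x | R g x} = c) :
    ∑ x, f x = (Fintype.card α).descFactorial (Fintype.card ι) * c := by
  have hcount := sum_card_bipartiteAbove_eq_sum_card_bipartiteBelow (s := {g | Injective g})
    (t := univ) R
  simp only [bipartiteAbove, bipartiteBelow, filter_filter] at hcount
  rw [sum_congr rfl fun g hg => hI g (mem_filter.1 hg).2, sum_const, card_injective,
    smul_eq_mul] at hcount
  rw [hcount]
  exact sum_congr rfl fun x _ => (hX x).symm

end DoubleCounting

section Wreath

variable (k : ℕ) {β : Type*} [Fintype β] [DecidableEq β]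

def wreathFixedPoints (x : (β → ZMod k) × Equiv.Perm β) : Finset β :=
  {a | x.1 a = 0 ∧ x.2 a = a}

lemma sum_descFactorial_card_wreathFixedPoints [NeZero k] (ι : Type*) [Fintype ι]
    [DecidableEq ι] :
    ∑ x : (β → ZMod k) × Equiv.Perm β,
        (#(wreathFixedPoints k x)).descFactorial (Fintype.card ι) =
      (Fintype.card β).descFactorial (Fintype.card ι) *
        (k ^ (Fintype.card β - Fintype.card ι) *
          (Fintype.card β - Fintype.card ι).factorial) := by
  refine sum_eq_descFactorial_mul_of_card_fibers (fun g x => ∀ a, g a ∈ wreathFixedPoints k x)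
    (fun x => card_injective_mapsTo _) fun g hg => ?_
  simp only [wreathFixedPoints, mem_filter, mem_univ, true_and, forall_and]
  rw [← univ_product_univ, filter_product (fun v : β → ZMod k => ∀ a, v (g a) = 0)
    (fun σ : Equiv.Perm β => ∀ a, σ (g a) = g a), card_product, card_fun_eq_on_range hg,
    ZMod.card, card_perm_fixing_s13 hg]

lemma binomialMoment_card_wreathFixedPoints [NeZero k] (i : ℕ) :
    binomialMoment (fun x : (β → ZMod k) × Equiv.Perm β => #(wreathFixedPoints k x)) i =
      (Fintype.card β).choose i *
        (k ^ (Fintype.card β - i) * (Fintype.card β - i).factorial) := by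
  have h := sum_descFactorial_card_wreathFixedPoints k (β := β) (Fin i)
  simp only [Fintype.card_fin, Nat.descFactorial_eq_factorial_mul_choose, ← mul_sum,
    mul_assoc] at h
  exact Nat.eq_of_mul_eq_mul_left i.factorial_pos h

end Wreath

lemma pow_apply_eq_of_semiconj {α J : Type*} {π : Equiv.Perm α} {k : ℕ}
    {g : J × ZMod k → α} (hg : ∀ s, π (g s) = g (s.1, s.2 + 1)) (i : J) (a : ℕ) :
    (π ^ a) (g (i, 0)) = g (i, a) := by
  induction a with
  | zero => simp
  | succ a ih => rw [pow_succ', Equiv.Perm.mul_apply, ih, hg, Nat.cast_succ]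

section CycleCount

variable {α : Type*} [Fintype α] [DecidableEq α] {π : Equiv.Perm α} {k : ℕ}

lemma mem_support_of_card_support_cycleOf_ne_zero {x : α}
    (h : #(π.cycleOf x).support ≠ 0) : x ∈ π.support := by
  contrapose! h
  simp [π.cycleOf_eq_one_iff.2 (Equiv.Perm.notMem_support.1 h)]

lemma card_support_cycleOf_eq_iff (hk : 2 ≤ k) {x : α} :
    #(π.cycleOf x).support = k ↔ ∀ a b : ℕ, (π ^ a) x = (π ^ b) x ↔ a ≡ b [MOD k] := by
  have hcycle (hx : x ∈ π.support) (a b : ℕ) :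
      (π ^ a) x = (π ^ b) x ↔ a ≡ b [MOD #(π.cycleOf x).support] :=
    (π.isCycleOn_support_cycleOf x).pow_apply_eq_pow_apply
      (Equiv.Perm.mem_support_cycleOf_iff.2 ⟨.refl _ _, hx⟩)
  constructor
  · intro hcard
    simpa [hcard] using hcycle (mem_support_of_card_support_cycleOf_ne_zero (by omega))
  · intro hmod
    have hx : x ∈ π.support := by
      rw [Equiv.Perm.mem_support]
      intro hfix
      have := (hmod 1 0).1 (by simpa using hfix)
      rw [Nat.ModEq, Nat.zero_mod, Nat.one_mod_eq_zero_iff] at this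
      omega
    refine Nat.dvd_antisymm ?_ ?_
    · rw [← Nat.modEq_zero_iff_dvd, ← hcycle hx,
        (hmod k 0).2 (Nat.modEq_zero_iff_dvd.2 dvd_rfl)]
    · rw [← Nat.modEq_zero_iff_dvd, ← hmod, hcycle hx, Nat.modEq_zero_iff_dvd]

def cycleRepresentatives (π : Equiv.Perm α) (k : ℕ) (J : Type*) [Fintype J] [DecidableEq J] :
    Finset (J → α) :=
  {p | (∀ i, #(π.cycleOf (p i)).support = k) ∧ Injective fun i => π.cycleOf (p i)}

lemma mem_cycleRepresentatives_of_semiconj {J : Type*} [Fintype J] [DecidableEq J]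
    (hk : 2 ≤ k) {g : J × ZMod k → α} (hinj : Injective g)
    (hg : ∀ s, π (g s) = g (s.1, s.2 + 1)) :
    (fun i => g (i, 0)) ∈ cycleRepresentatives π k J := by
  have hpow := pow_apply_eq_of_semiconj hg
  have hcard (i : J) : #(π.cycleOf (g (i, 0))).support = k :=
    (card_support_cycleOf_eq_iff hk).2 fun a b => by
      rw [hpow, hpow, hinj.eq_iff, Prod.mk.injEq, ZMod.natCast_eq_natCast_iff]
      simp
  refine mem_filter.2 ⟨mem_univ _, hcard, fun i j hij => ?_⟩
  have hmem : g (j, 0) ∈ (π.cycleOf (g (i, 0))).support := by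
    rw [show π.cycleOf (g (i, 0)) = π.cycleOf (g (j, 0)) from hij]
    exact Equiv.Perm.mem_support_cycleOf_iff.2
      ⟨.refl _ _, mem_support_of_card_support_cycleOf_ne_zero (by have := hcard j; omega)⟩
  obtain ⟨a, ha⟩ := (Equiv.Perm.mem_support_cycleOf_iff.1 hmem).1.exists_nat_pow_eq
  rw [hpow] at ha
  exact congrArg Prod.fst (hinj ha)

lemma injective_semiconj_of_mem_cycleRepresentatives {J : Type*} [Fintype J] [DecidableEq J]
    (hk : 2 ≤ k) [NeZero k] {p : J → α} (hp : p ∈ cycleRepresentatives π k J) :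
    Injective (fun s : J × ZMod k => (π ^ s.2.val) (p s.1)) ∧
      ∀ s : J × ZMod k, π ((π ^ s.2.val) (p s.1)) = (π ^ (s.2 + 1).val) (p s.1) := by
  obtain ⟨hcard, hinj⟩ := (mem_filter.1 hp).2
  have hmod (i : J) := (card_support_cycleOf_eq_iff hk).1 (hcard i)
  refine ⟨fun ⟨i, s⟩ ⟨j, t⟩ hst => ?_, fun ⟨i, s⟩ => ?_⟩
  · obtain rfl : i = j := hinj <| by
      simpa only [Equiv.Perm.cycleOf_self_apply_pow] using congrArg π.cycleOf hst
    have hval := (ZMod.natCast_eq_natCast_iff _ _ _).2 ((hmod i _ _).1 hst)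
    simp only [ZMod.natCast_zmod_val] at hval
    rw [hval]
  · rw [← Equiv.Perm.mul_apply, ← pow_succ', hmod, ← ZMod.natCast_eq_natCast_iff]
    simp

lemma card_injective_semiconj (hk : 2 ≤ k) [NeZero k] (J : Type*) [Fintype J]
    [DecidableEq J] :
    #{g : J × ZMod k → α | Injective g ∧ ∀ s, π (g s) = g (s.1, s.2 + 1)} =
      #(cycleRepresentatives π k J) := by
  refine card_nbij' (fun g i => g (i, 0)) (fun p s => (π ^ s.2.val) (p s.1))
    (fun g hg => ?_) (fun p hp => ?_) (fun g hg => ?_) (fun p _ => ?_)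
  · simp only [coe_filter, mem_univ, true_and, Set.mem_ofPred_eq] at hg
    exact mem_cycleRepresentatives_of_semiconj hk hg.1 hg.2
  · simpa using injective_semiconj_of_mem_cycleRepresentatives hk hp
  · simp only [coe_filter, mem_univ, true_and, Set.mem_ofPred_eq] at hg
    funext ⟨i, s⟩
    dsimp only
    rw [pow_apply_eq_of_semiconj hg.2, ZMod.natCast_zmod_val]
  · funext i
    simp

lemma count_cycleType_eq_card_filter (π : Equiv.Perm α) (k : ℕ) :
    π.cycleType.count k = #{c ∈ π.cycleFactorsFinset | #c.support = k} := by
  rw [Equiv.Perm.cycleType_def, Multiset.count_map, card_def, filter_val]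
  simp_rw [eq_comm (a := k)]
  rfl

lemma card_cycleRepresentatives (hk : k ≠ 0) (J : Type*) [Fintype J] [DecidableEq J] :
    #(cycleRepresentatives π k J) =
      (π.cycleType.count k).descFactorial (Fintype.card J) * k ^ Fintype.card J := by
  set S := {c ∈ π.cycleFactorsFinset | #c.support = k}
  have hS (x : α) : #(π.cycleOf x).support = k ↔ π.cycleOf x ∈ S := by
    refine ⟨fun h => mem_filter.2 ⟨?_, h⟩, fun h => (mem_filter.1 h).2⟩
    exact Equiv.Perm.cycleOf_mem_cycleFactorsFinset_iff.2
      (mem_support_of_card_support_cycleOf_ne_zero (h ▸ hk))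
  set T : Finset (J → Equiv.Perm α) := {c | Injective c ∧ ∀ i, c i ∈ S}
  have hfiber (c : J → Equiv.Perm α) (hc : c ∈ T) :
      #{p ∈ cycleRepresentatives π k J | (fun i => π.cycleOf (p i)) = c} =
        k ^ Fintype.card J := by
    simp only [T, S, mem_filter, mem_univ, true_and] at hc
    obtain ⟨hinj, hcS⟩ := hc
    have hmem (i : J) (x : α) : x ∈ (c i).support ↔ π.cycleOf x = c i := by
      rw [← Equiv.Perm.eq_cycleOf_of_mem_cycleFactorsFinset_iff π _ (hcS i).1, eq_comm]
    have hpi : {p ∈ cycleRepresentatives π k J | (fun i => π.cycleOf (p i)) = c} =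
        Fintype.piFinset fun i => (c i).support := by
      ext p
      simp only [cycleRepresentatives, mem_filter, mem_univ, true_and, Fintype.mem_piFinset, hmem,
        funext_iff]
      refine ⟨fun h => h.2, fun h => ⟨⟨fun i => h i ▸ (hcS i).2, ?_⟩, h⟩⟩
      rwa [show (fun i => π.cycleOf (p i)) = c from funext h]
    rw [hpi, Fintype.card_piFinset, prod_congr rfl fun i _ => (hcS i).2, prod_const, card_univ]
  rw [card_eq_sum_card_fiberwise (t := T) ?_,
    sum_congr rfl hfiber, sum_const, card_injective_mapsTo, count_cycleType_eq_card_filter,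
    smul_eq_mul]
  intro p hp
  simp only [T, cycleRepresentatives, coe_filter, mem_univ, true_and, Set.mem_ofPred_eq,
    hS] at hp ⊢
  exact hp.symm

lemma count_cycleType_mul_le (π : Equiv.Perm α) (k : ℕ) :
    π.cycleType.count k * k ≤ Fintype.card α := by
  have hrep : Multiset.replicate (π.cycleType.count k) k ≤ π.cycleType :=
    Multiset.le_count_iff_replicate_le.1 le_rfl
  obtain ⟨u, hu⟩ := exists_add_of_le hrep
  calc π.cycleType.count k * k = (Multiset.replicate (π.cycleType.count k) k).sum := by simp
    _ ≤ (Multiset.replicate (π.cycleType.count k) k + u).sum := by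
      rw [Multiset.sum_add]; exact Nat.le_add_right _ _
    _ = π.cycleType.sum := by rw [← hu]
    _ ≤ Fintype.card α := π.sum_cycleType_le

lemma sum_descFactorial_count_cycleType (hk : 2 ≤ k) (J : Type*) [Fintype J] [DecidableEq J]
    (hJ : Fintype.card J * k ≤ Fintype.card α) :
    ∑ π : Equiv.Perm α,
        (π.cycleType.count k).descFactorial (Fintype.card J) * k ^ Fintype.card J =
      (Fintype.card α).factorial := by
  have : NeZero k := ⟨by omega⟩
  have h := sum_eq_descFactorial_mul_of_card_fibers (ι := J × ZMod k)
    (fun g (π : Equiv.Perm α) => ∀ s, π (g s) = g (s.1, s.2 + 1))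
    (fun π => (card_injective_semiconj hk J).trans (card_cycleRepresentatives (by omega) J))
    (fun g hg => card_perm_semiconj ((Equiv.refl J).prodCongr (Equiv.addRight 1)) hg)
  rw [h, Fintype.card_prod, ZMod.card, mul_comm, Nat.factorial_mul_descFactorial hJ]

lemma binomialMoment_count_cycleType (hk : 2 ≤ k) {j : ℕ} (hj : j * k ≤ Fintype.card α) :
    binomialMoment (fun π : Equiv.Perm α => π.cycleType.count k) j * (k ^ j * j.factorial) =
      (Fintype.card α).factorial := by
  have h := sum_descFactorial_count_cycleType (α := α) hk (Fin j) (by rwa [Fintype.card_fin])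
  simp only [Fintype.card_fin, Nat.descFactorial_eq_factorial_mul_choose] at h
  rw [← h, binomialMoment, sum_mul]
  exact sum_congr rfl fun π _ => by ring

end CycleCount

lemma C_eq_alternating_sum {k n m : ℕ} (hk : 2 ≤ k) (hm : m ≤ n) :
    (C k (k * n) m : ℚ) = ∑ i ∈ range (n - m + 1),
      (-1 : ℚ) ^ i * (m + i).choose m *
        ((k * n).factorial / (k ^ (m + i) * (m + i).factorial)) := by
  have hle (π : Equiv.Perm (Fin (k * n))) : π.cycleType.count k ≤ n := by
    have := (count_cycleType_mul_le π k).trans_eq ((Fintype.card_fin _).trans (mul_comm k n))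
    exact Nat.le_of_mul_le_mul_right this (by omega)
  have h := card_filter_eq_sum_binomialMoment _ hle m
  rw [C, Nat.card_eq_fintype_card, Fintype.card_subtype]
  rw [← Int.cast_inj (α := ℚ)] at h
  push_cast at h
  rw [h]
  refine sum_congr rfl fun i hi => congrArg _ ?_
  have hmi : (m + i) * k ≤ Fintype.card (Fin (k * n)) := by
    rw [Fintype.card_fin, mul_comm k]
    exact Nat.mul_le_mul_right k (by simp at hi; omega)
  have hmoment := binomialMoment_count_cycleType hk hmi
  rw [Fintype.card_fin] at hmoment
  rw [eq_div_iff (by positivity)]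
  exact_mod_cast hmoment

lemma D_eq_alternating_sum (k r : ℕ) [NeZero k] :
    (D k r : ℤ) =
      ∑ i ∈ range (r + 1),
        (-1 : ℤ) ^ i * (r.choose i * (k ^ (r - i) * (r - i).factorial)) := by
  have h := card_filter_eq_sum_binomialMoment
    (fun x : (Fin r → ZMod k) × Equiv.Perm (Fin r) => #(wreathFixedPoints k x))
    (fun x => (card_le_univ _).trans_eq (Fintype.card_fin r)) 0
  simp only [Nat.sub_zero, zero_add, Nat.choose_zero_right, Nat.cast_one, mul_one,
    binomialMoment_card_wreathFixedPoints, Fintype.card_fin] at h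
  push_cast at h
  rw [D, Nat.card_eq_fintype_card, Fintype.card_subtype, ← h]
  congr 2
  ext x
  simp [wreathFixedPoints, Decidable.imp_iff_not_or, or_comm]

lemma pow_mul_factorial_mul_choose_div_eq {K : Type*} [Field K] [CharZero K] {k : K}
    (hk : k ≠ 0) {n m i : ℕ} (h : m + i ≤ n) :
    k ^ n * n.factorial * (m + i).choose m / (k ^ (m + i) * (m + i).factorial) =
      n.choose m * ((n - m).choose i * (k ^ (n - m - i) * (n - m - i).factorial)) := by
  have hpow : k ^ n = k ^ (m + i) * k ^ (n - m - i) := by rw [← pow_add]; congr 1; omega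
  rw [Nat.cast_choose K (Nat.le_add_right m i), Nat.cast_choose K (by omega : m ≤ n),
    Nat.cast_choose K (by omega : i ≤ n - m), Nat.add_sub_cancel_left, hpow]
  have hfact (t : ℕ) : (t.factorial : K) ≠ 0 := Nat.cast_ne_zero.2 t.factorial_ne_zero
  field_simp
  rw [div_eq_div_iff (by simp [hfact]) (by simp [hfact])]
  ring

theorem stmt13 (k n m : ℕ) (hk : 2 ≤ k) (hm : m ≤ n) :
    k ^ n * n.factorial * C k (k * n) m =
      (k * n).factorial * n.choose m * D k (n - m) := by
  have : NeZero k := ⟨by omega⟩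
  have hD : (D k (n - m) : ℚ) = ∑ i ∈ range (n - m + 1),
      (-1 : ℚ) ^ i * ((n - m).choose i * (k ^ (n - m - i) * (n - m - i).factorial)) := by
    exact_mod_cast D_eq_alternating_sum k (n - m)
  suffices h : (k : ℚ) ^ n * n.factorial * C k (k * n) m =
      (k * n).factorial * n.choose m * D k (n - m) by exact_mod_cast h
  rw [C_eq_alternating_sum hk hm, hD, mul_sum, mul_sum]
  refine sum_congr rfl fun i hi => ?_
  have h := pow_mul_factorial_mul_choose_div_eq (K := ℚ) (k := k)
    (Nat.cast_ne_zero.2 (NeZero.ne k)) (by simp at hi; omega : m + i ≤ n)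
  linear_combination (-1 : ℚ) ^ i * (k * n).factorial * h
end
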